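/- Let g:[0,1]→ℝ^d be a curve with 0 < 𝓛(g) < ∞, |g′(t)| = 𝓛(g) for Lebesgue-a.e. t ∈ [0,1], and ℋ¹(Im g) = 𝓛(g). Then the pushforward λ ∘ g^{−1} of the Lebesgue measure λ on [0,1] by g equals the trace of ℋ¹/𝓛(g) on Im g; that is, for every Borel set A ⊆ Im g, λ(g^{−1}(A)) = ℋ¹(A)/𝓛(g). -/

import Mathlib

open MeasureTheory Filter
open scoped ENNReal NNReal InnerProductSpace Topology
open Set

/-!
A curve of length `𝓛` parametrised on `[0,1]` whose speed is `𝓛` almost everywhere has constant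
speed: the derivative of its arc-length function dominates the speed, so the arc length over any
subinterval is at least `𝓛` times its length, and since the total is exactly `𝓛` these lower bounds
are equalities. Hence `g` is `𝓛`-Lipschitz and `ℋ¹(g(E)) ≤ 𝓛 λ(E)` for every `E ⊆ [0,1]`. Applied
to `E = g⁻¹(A)` and to its complement, these two upper bounds add up to `ℋ¹(Im g) = 𝓛`, so neither
can be strict.
-/

theorem dist_le_variationOnFromTo {α E : Type*} [LinearOrder α] [PseudoMetricSpace E]
    {f : α → E} {s : Set α} (hf : LocallyBoundedVariationOn f s) {x y : α} (hx : x ∈ s)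
    (hy : y ∈ s) (hxy : x ≤ y) :
    dist (f x) (f y) ≤ variationOnFromTo f s x y := by
  rw [variationOnFromTo.eq_of_le f s hxy, dist_edist]
  exact ENNReal.toReal_mono (hf x y hx hy)
    (eVariationOn.edist_le f ⟨hx, le_rfl, hxy⟩ ⟨hy, hxy, le_rfl⟩)

theorem HasConstantSpeedOnWith.lipschitzOnWith {E : Type*} [PseudoEMetricSpace E] {f : ℝ → E}
    {s : Set ℝ} {l : ℝ≥0} (h : HasConstantSpeedOnWith f s l) : LipschitzOnWith l f s := by
  intro x hx y hy
  wlog hxy : x ≤ y generalizing x y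
  · rw [edist_comm, edist_comm x]
    exact this hy hx (le_of_not_ge hxy)
  calc edist (f x) (f y) ≤ eVariationOn f (s ∩ Icc x y) :=
        eVariationOn.edist_le f ⟨hx, le_rfl, hxy⟩ ⟨hy, hxy, le_rfl⟩
    _ = ENNReal.ofReal (l * (y - x)) := h hx hy
    _ = l * edist x y := by
        rw [edist_dist, Real.dist_eq, abs_of_nonpos (sub_nonpos.2 hxy), neg_sub,
          ENNReal.ofReal_mul l.coe_nonneg, ENNReal.ofReal_coe_nnreal]

theorem MonotoneOn.mul_sub_le_sub_of_ae_le_deriv {φ : ℝ → ℝ} {a b c : ℝ} (hab : a ≤ b)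
    (hφ : MonotoneOn φ (Icc a b)) (h : ∀ᵐ t ∂volume.restrict (Icc a b), c ≤ deriv φ t) :
    c * (b - a) ≤ φ b - φ a := by
  rw [← uIcc_of_le hab] at hφ
  calc c * (b - a) = ∫ _ in a..b, c := by simp [mul_comm]
    _ ≤ ∫ t in a..b, deriv φ t :=
        intervalIntegral.integral_mono_ae_restrict hab intervalIntegrable_const
          hφ.intervalIntegrable_deriv h
    _ ≤ φ b - φ a := by
        have := hφ.intervalIntegral_deriv_mem_uIcc
        rw [uIcc_of_le (hφ (by simp) (by simp) hab |> sub_nonneg.2)] at this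
        exact this.2

section Speed

variable {E : Type*} [NormedAddCommGroup E] [NormedSpace ℝ E]

theorem norm_le_of_hasDerivAt_of_norm_sub_le {f : ℝ → E} {φ : ℝ → ℝ} {f' : E} {φ' t : ℝ}
    (hf : HasDerivAt f f' t) (hφ : HasDerivAt φ φ' t)
    (h : ∀ᶠ y in 𝓝[>] t, ‖f y - f t‖ ≤ φ y - φ t) : ‖f'‖ ≤ φ' := by
  have hf' : Tendsto (fun y => ‖slope f t y‖) (𝓝[>] t) (𝓝 ‖f'‖) :=
    ((hasDerivAt_iff_tendsto_slope.1 hf).mono_left (nhdsGT_le_nhdsNE t)).norm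
  have hφ' : Tendsto (slope φ t) (𝓝[>] t) (𝓝 φ') :=
    (hasDerivAt_iff_tendsto_slope.1 hφ).mono_left (nhdsGT_le_nhdsNE t)
  refine le_of_tendsto_of_tendsto hf' hφ' ?_
  filter_upwards [h, self_mem_nhdsWithin] with y hy (hty : t < y)
  have hpos : 0 < y - t := sub_pos.2 hty
  rw [slope_def_module, norm_smul, norm_inv, Real.norm_of_nonneg hpos.le, inv_mul_eq_div,
    slope_def_field]
  exact div_le_div_of_nonneg_right hy hpos.le

theorem ae_norm_le_deriv_variationOnFromTo {f f' : ℝ → E} {a b : ℝ}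
    (hf : LocallyBoundedVariationOn f (Icc a b)) (hab : a ≤ b)
    (hderiv : ∀ᵐ t ∂volume.restrict (Icc a b), HasDerivAt f (f' t) t) :
    ∀ᵐ t ∂volume.restrict (Icc a b), ‖f' t‖ ≤ deriv (variationOnFromTo f (Icc a b) a) t := by
  have ha : a ∈ Icc a b := left_mem_Icc.2 hab
  have hV := variationOnFromTo.monotoneOn hf ha
  rw [← restrict_Ioo_eq_restrict_Icc] at hderiv ⊢
  filter_upwards [hderiv, ae_restrict_of_ae hV.ae_differentiableWithinAt_of_mem,
    ae_restrict_mem measurableSet_Ioo] with t hft hVt ht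
  have htI : t ∈ Icc a b := Ioo_subset_Icc_self ht
  have hVd := (hVt htI).differentiableAt (Icc_mem_nhds ht.1 ht.2)
  refine norm_le_of_hasDerivAt_of_norm_sub_le hft hVd.hasDerivAt ?_
  filter_upwards [Ioo_mem_nhdsGT ht.2] with y hy
  have hyI : y ∈ Icc a b := ⟨ht.1.le.trans hy.1.le, hy.2.le⟩
  rw [variationOnFromTo.sub_right hf ha hyI htI, ← dist_eq_norm, dist_comm]
  exact dist_le_variationOnFromTo hf htI hyI hy.1.le

theorem hasConstantSpeedOnWith_of_le_norm_deriv {f f' : ℝ → E} {a b : ℝ} {l : ℝ≥0}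
    (hvar : eVariationOn f (Icc a b) ≤ ENNReal.ofReal (l * (b - a)))
    (hderiv : ∀ᵐ t ∂volume.restrict (Icc a b), HasDerivAt f (f' t) t ∧ l ≤ ‖f' t‖) :
    HasConstantSpeedOnWith f (Icc a b) l := by
  have hbv : LocallyBoundedVariationOn f (Icc a b) :=
    BoundedVariationOn.locallyBoundedVariationOn (ne_top_of_le_ne_top ENNReal.ofReal_ne_top hvar)
  rw [hasConstantSpeedOnWith_iff_ordered]
  intro x hx y hy hxy
  have hab : a ≤ b := hx.1.trans hx.2
  have ha : a ∈ Icc a b := left_mem_Icc.2 hab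
  set V := variationOnFromTo f (Icc a b) a
  have hV : MonotoneOn V (Icc a b) := variationOnFromTo.monotoneOn hbv ha
  have hV' : ∀ᵐ t ∂volume.restrict (Icc a b), (l : ℝ) ≤ deriv V t := by
    have hspeed := ae_norm_le_deriv_variationOnFromTo hbv hab (hderiv.mono fun _ => And.left)
    filter_upwards [hderiv, hspeed] with t ht hVt using ht.2.trans hVt
  have lower : ∀ u ∈ Icc a b, ∀ v ∈ Icc a b, u ≤ v → l * (v - u) ≤ V v - V u :=
    fun u hu v hv huv => (hV.mono (Icc_subset_Icc hu.1 hv.2)).mul_sub_le_sub_of_ae_le_deriv huv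
      (ae_restrict_of_ae_restrict_of_subset (Icc_subset_Icc hu.1 hv.2) hV')
  have total : V b - V a ≤ l * (b - a) := by
    simp only [V, variationOnFromTo.self, sub_zero, variationOnFromTo.eq_of_le f _ hab, inter_self]
    exact ENNReal.toReal_le_of_le_ofReal (mul_nonneg l.coe_nonneg (sub_nonneg.2 hab)) hvar
  have hxy_eq : V y - V x = l * (y - x) := by
    have := lower a ha x hx hx.1
    have := lower y hy b (right_mem_Icc.2 hab) hy.2
    linarith [lower x hx y hy hxy]
  rw [← hxy_eq, variationOnFromTo.sub_right hbv ha hy hx, variationOnFromTo.eq_of_le f _ hxy,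
    ENNReal.ofReal_toReal (hbv x y hx hy)]

end Speed

theorem LipschitzOnWith.hausdorffMeasure_image_eq_of_subset {X Y : Type*} [EMetricSpace X]
    [MeasurableSpace X] [BorelSpace X] [EMetricSpace Y] [MeasurableSpace Y] [BorelSpace Y]
    {K : ℝ≥0} {f : X → Y} {s t : Set X} {d : ℝ} (hf : LipschitzOnWith K f s) (hd : 0 ≤ d)
    (hs : μH[d] s ≠ ⊤) (hfs : μH[d] (f '' s) = (K : ℝ≥0∞) ^ d * μH[d] s) (hts : t ⊆ s)
    (ht : NullMeasurableSet t μH[d]) :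
    μH[d] (f '' t) = (K : ℝ≥0∞) ^ d * μH[d] t := by
  refine le_antisymm ((hf.mono hts).hausdorffMeasure_image_le hd) ?_
  have hrest : μH[d] (f '' (s \ t)) ≤ (K : ℝ≥0∞) ^ d * μH[d] (s \ t) :=
    (hf.mono sdiff_subset).hausdorffMeasure_image_le hd
  have hfin : (K : ℝ≥0∞) ^ d * μH[d] (s \ t) ≠ ⊤ :=
    ENNReal.mul_ne_top (ENNReal.rpow_ne_top_of_nonneg hd ENNReal.coe_ne_top)
      (ne_top_of_le_ne_top hs (measure_mono sdiff_subset))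
  refine ENNReal.le_of_add_le_add_right hfin ?_
  calc (K : ℝ≥0∞) ^ d * μH[d] t + (K : ℝ≥0∞) ^ d * μH[d] (s \ t)
      = μH[d] (f '' s) := by rw [← mul_add, measure_add_sdiff ht, union_eq_right.2 hts, hfs]
    _ ≤ μH[d] (f '' t ∪ f '' (s \ t)) := by rw [← image_union, union_sdiff_cancel hts]
    _ ≤ μH[d] (f '' t) + μH[d] (f '' (s \ t)) := measure_union_le _ _
    _ ≤ μH[d] (f '' t) + (K : ℝ≥0∞) ^ d * μH[d] (s \ t) := by gcongr

theorem statement_14_general {d : ℕ}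
    (g : ℝ → EuclideanSpace ℝ (Fin d))
    (hpos : eVariationOn g (Set.Icc 0 1) ≠ 0)
    (hrect : eVariationOn g (Set.Icc 0 1) ≠ ⊤)
    (g' : ℝ → EuclideanSpace ℝ (Fin d))
    (hderiv : ∀ᵐ t ∂(volume.restrict (Set.Icc (0:ℝ) 1)),
      HasDerivAt g (g' t) t ∧ ‖g' t‖ = (eVariationOn g (Set.Icc 0 1)).toReal)
    (hlen : μH[1] (g '' Set.Icc 0 1) = eVariationOn g (Set.Icc 0 1)) :
    ∀ A : Set (EuclideanSpace ℝ (Fin d)), A ⊆ g '' Set.Icc 0 1 → MeasurableSet A →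
      volume (g ⁻¹' A ∩ Set.Icc 0 1) = μH[1] A / eVariationOn g (Set.Icc 0 1) := by
  intro A hAsub hA
  set I : Set ℝ := Icc 0 1
  set l : ℝ≥0 := (eVariationOn g I).toNNReal
  have hl : (l : ℝ≥0∞) = eVariationOn g I := ENNReal.coe_toNNReal hrect
  have hlip : LipschitzOnWith l g I := by
    refine (hasConstantSpeedOnWith_of_le_norm_deriv (f' := g') ?_ ?_).lipschitzOnWith
    · simp [hl, I]
    · filter_upwards [hderiv] with t ht
      exact ⟨ht.1, by rw [ht.2, ENNReal.coe_toNNReal_eq_toReal]⟩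
  have hE : NullMeasurableSet (g ⁻¹' A ∩ I) μH[1] := by
    rw [hausdorffMeasure_real, ← nullMeasurableSet_restrict measurableSet_Icc.nullMeasurableSet]
    exact (hlip.continuousOn.aemeasurable measurableSet_Icc).nullMeasurable hA
  have hgE : g '' (g ⁻¹' A ∩ I) = A := by rw [image_preimage_inter, inter_eq_left.2 hAsub]
  have key := hlip.hausdorffMeasure_image_eq_of_subset zero_le_one
    (by simp [hausdorffMeasure_real, I]) (by simp [hausdorffMeasure_real, I, hlen, hl])
    inter_subset_right hE
  rw [hgE, ENNReal.rpow_one, hausdorffMeasure_real, hl] at key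
  exact (ENNReal.eq_div_iff hpos hrect).2 key.symm

/-- Let `g : [0,1] → ℝ^d` be a curve with `0 < 𝓛(g) < ∞`,
constant speed `|g'(t)| = 𝓛(g)` a.e., and `ℋ¹(Im g) = 𝓛(g)`. Then the pushforward
of Lebesgue measure `λ` on `[0,1]` by `g` is the trace of `ℋ¹/𝓛(g)` on `Im g`:
for every Borel set `A ⊆ Im g`, `λ(g⁻¹(A)) = ℋ¹(A)/𝓛(g)`. -/
theorem statement_14 {d : ℕ}
    (g : ℝ → EuclideanSpace ℝ (Fin d)) (hg : ContinuousOn g (Set.Icc 0 1))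
    (hpos : eVariationOn g (Set.Icc 0 1) ≠ 0)
    (hrect : eVariationOn g (Set.Icc 0 1) ≠ ⊤)
    (g' : ℝ → EuclideanSpace ℝ (Fin d))
    (hderiv : ∀ᵐ t ∂(volume.restrict (Set.Icc (0:ℝ) 1)),
      HasDerivAt g (g' t) t ∧ ‖g' t‖ = (eVariationOn g (Set.Icc 0 1)).toReal)
    (hlen : μH[1] (g '' Set.Icc 0 1) = eVariationOn g (Set.Icc 0 1)) :
    ∀ A : Set (EuclideanSpace ℝ (Fin d)), A ⊆ g '' Set.Icc 0 1 → MeasurableSet A →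
      volume (g ⁻¹' A ∩ Set.Icc 0 1) = μH[1] A / eVariationOn g (Set.Icc 0 1) :=
  statement_14_general g hpos hrect g' hderiv hlen
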